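/- For all real numbers r > 0, s > 0, and τ with 0 < τ < 1, we have log(1 + r/s) ≤ max(1/s, 1/s^τ) · (1+r)^τ · log(1 + r). -/

import Mathlib

/-!
For `s ≤ 1` this is concavity of `x ↦ log (1 + x)` (Bernoulli's inequality), which gives
`log (1 + r / s) ≤ log (1 + r) / s`. For `s ≥ 1` the two elementary bounds
`log (1 + r / s) ≤ log (1 + r)` and `log (1 + r / s) ≤ r / s ≤ (1 + r) / s * log (1 + r)` give
the factor `min 1 ((1 + r) / s)`, which is at most `((1 + r) / s) ^ τ`.
-/

open Real

namespace Real

lemma log_one_add_mul_le_mul_log {t x : ℝ} (ht : 1 ≤ t) (hx : 0 ≤ x) :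
    log (1 + t * x) ≤ t * log (1 + x) := by
  rw [← log_rpow (by linarith)]
  exact log_le_log (by positivity) (one_add_mul_self_le_rpow_one_add (by linarith) ht)

lemma div_one_add_le_log_one_add {x : ℝ} (hx : -1 < x) : x / (1 + x) ≤ log (1 + x) := by
  have h := one_sub_inv_le_log_of_pos (show 0 < 1 + x by linarith)
  rwa [← one_div, one_sub_div (by linarith), add_sub_cancel_left] at h

lemma log_one_add_div_le_min_mul_log {r s : ℝ} (hr : 0 ≤ r) (hs : 1 ≤ s) :
    log (1 + r / s) ≤ min 1 ((1 + r) / s) * log (1 + r) := by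
  have hs0 : 0 < s := by linarith
  rw [min_mul_of_nonneg _ _ (log_nonneg (by linarith)), one_mul]
  have hdiv : r / s ≤ r := div_le_self hr hs
  refine le_min (log_le_log (by positivity) (by linarith)) ?_
  calc log (1 + r / s) ≤ r / s := by
        linarith [log_le_sub_one_of_pos (x := 1 + r / s) (by positivity)]
    _ = (1 + r) / s * (r / (1 + r)) := by field_simp
    _ ≤ (1 + r) / s * log (1 + r) := by gcongr; exact div_one_add_le_log_one_add (by linarith)

lemma min_one_le_rpow {x τ : ℝ} (hx : 0 ≤ x) (hτ0 : 0 ≤ τ) (hτ1 : τ ≤ 1) :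
    min 1 x ≤ x ^ τ := by
  rcases le_total x 1 with hx1 | hx1
  · exact (min_le_right _ _).trans (self_le_rpow_of_le_one hx hx1 hτ1)
  · exact (min_le_left _ _).trans (one_le_rpow hx1 hτ0)

end Real

theorem log_one_add_div_le_max (r s τ : ℝ) (hr : 0 < r) (hs : 0 < s)
    (hτ0 : 0 < τ) (hτ1 : τ < 1) :
    Real.log (1 + r / s) ≤ max (1 / s) (1 / s ^ τ) * (1 + r) ^ τ * Real.log (1 + r) := by
  have hlog : 0 ≤ log (1 + r) := log_nonneg (by linarith)
  rcases le_total s 1 with hs1 | hs1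
  · calc log (1 + r / s) = log (1 + 1 / s * r) := by rw [one_div_mul_eq_div]
      _ ≤ 1 / s * log (1 + r) := log_one_add_mul_le_mul_log (one_le_one_div hs hs1) hr.le
      _ ≤ max (1 / s) (1 / s ^ τ) * (1 + r) ^ τ * log (1 + r) := by
        gcongr
        exact (le_max_left _ _).trans
          (le_mul_of_one_le_right (by positivity) (one_le_rpow (by linarith) hτ0.le))
  · calc log (1 + r / s) ≤ min 1 ((1 + r) / s) * log (1 + r) :=
          log_one_add_div_le_min_mul_log hr.le hs1
      _ ≤ ((1 + r) / s) ^ τ * log (1 + r) := by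
        gcongr
        exact min_one_le_rpow (by positivity) hτ0.le hτ1.le
      _ = 1 / s ^ τ * (1 + r) ^ τ * log (1 + r) := by
        rw [div_rpow (by linarith) hs.le]
        ring
      _ ≤ max (1 / s) (1 / s ^ τ) * (1 + r) ^ τ * log (1 + r) := by
        gcongr
        exact le_max_right _ _
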